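/- Fix p ∈ [1,2] and C_p > 0, and let r_i be nonnegative with r_i ≤ 2 and i^{p/2} r_i → C_p. For a probability vector q on a finite set 𝒳 of size k, define F_m(q) = Σ_{x∈𝒳} Σ_{i=0}^m C(m,i) q(x)^{i+p} (1−q(x))^{m−i} r_i. Then max over probability vectors q of F_m(q) satisfies m^{p/2} · max_q F_m(q) → C_p · k^{1−p/2} as m → ∞. -/

import Mathlib

open Filter Set Real
open scoped Topology Pointwise

/-!
Write `H_m(x) = ∑ᵢ C(m,i) xⁱ (1-x)^(m-i) rᵢ` for the mean of `r` under Binomial(m, x)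
(`binomMean`), so that `F_m(q) = ∑ₓ q(x)^p H_m(q(x))`, and put `s = p/2`.

For the model sequence `rᵢ = (i+1)^(-s)`, Jensen's inequality squeezes `m^s x^p H_m(x)` between
`x^s (mx/(mx+1))^s` and `x^s`: the convex `t ↦ t^(-s)` gives the lower bound from
`E[Bin(m,x) + 1] = mx + 1`, the concave `t ↦ t^s` the upper one from
`E[1/(Bin(m,x) + 1)] ≤ 1/((m+1)x)`.
A general `r` with `(i+1)^s rᵢ → C` differs from `C` times the model by `o((i+1)^(-s))`: the tail
of the difference contributes `o(x^s)`, and each of the finitely many remaining terms is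
`O(m^(-s))` uniformly in `x`, because `x^p C(m,i) xⁱ(1-x)^(m-i) ≤ ((i+2)/(m+1))^p`.
So `m^s x^p H_m(x) ≤ C x^s + o(1)` uniformly on `[0,1]`, with convergence to `C x^s` at each
`x > 0`. Summing over `𝒳`, concavity gives `∑ₓ q(x)^s ≤ k^(1-s)` for every `q`, and the uniform
distribution attains this bound in the limit.
-/

noncomputable section

def binomWeight (m i : ℕ) (x : ℝ) : ℝ := m.choose i * x ^ i * (1 - x) ^ (m - i)

def binomMean (r : ℕ → ℝ) (m : ℕ) (x : ℝ) : ℝ :=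
  ∑ i ∈ Finset.range (m + 1), binomWeight m i x * r i

def powerDecay (s : ℝ) (i : ℕ) : ℝ := ((i : ℝ) + 1) ^ (-s)

def scaledRisk (p : ℝ) (r : ℕ → ℝ) (m : ℕ) (x : ℝ) : ℝ :=
  (m : ℝ) ^ (p / 2) * x ^ p * binomMean r m x

end

section binomWeight

variable {m i : ℕ} {x : ℝ}

lemma binomWeight_eq_eval (m i : ℕ) (x : ℝ) :
    binomWeight m i x = (bernsteinPolynomial ℝ m i).eval x := by
  simp [bernsteinPolynomial, binomWeight]

lemma binomWeight_nonneg (hx : x ∈ Icc (0 : ℝ) 1) : 0 ≤ binomWeight m i x := by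
  have := hx.1
  have := sub_nonneg.2 hx.2
  unfold binomWeight
  positivity

lemma sum_binomWeight (m : ℕ) (x : ℝ) :
    ∑ i ∈ Finset.range (m + 1), binomWeight m i x = 1 := by
  simpa [binomWeight_eq_eval, Polynomial.eval_finsetSum] using
    congrArg (Polynomial.eval x) (bernsteinPolynomial.sum ℝ m)

lemma sum_mul_binomWeight (m : ℕ) (x : ℝ) :
    ∑ i ∈ Finset.range (m + 1), (i : ℝ) * binomWeight m i x = m * x := by
  simpa [binomWeight_eq_eval, Polynomial.eval_finsetSum, nsmul_eq_mul] using
    congrArg (Polynomial.eval x) (bernsteinPolynomial.sum_smul ℝ m)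

lemma binomWeight_le_one (hx : x ∈ Icc (0 : ℝ) 1) : binomWeight m i x ≤ 1 := by
  rcases le_or_gt i m with him | hmi
  · rw [← sum_binomWeight m x]
    exact Finset.single_le_sum (f := fun j => binomWeight m j x)
      (fun j _ => binomWeight_nonneg hx) (Finset.mem_range.2 (Nat.lt_succ_of_le him))
  · simp [binomWeight, Nat.choose_eq_zero_of_lt hmi]

lemma mul_binomWeight (m i : ℕ) (x : ℝ) :
    (m + 1) * (x * binomWeight m i x) = (i + 1) * binomWeight (m + 1) (i + 1) x := by
  have h : ((m + 1 : ℕ) : ℝ) * m.choose i = (m + 1).choose (i + 1) * (i + 1 : ℕ) := by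
    exact_mod_cast Nat.add_one_mul_choose_eq m i
  push_cast at h
  simp only [binomWeight, Nat.add_sub_add_right]
  linear_combination x ^ (i + 1) * (1 - x) ^ (m - i) * h

lemma sq_mul_binomWeight_le (hx : x ∈ Icc (0 : ℝ) 1) :
    x ^ 2 * binomWeight m i x ≤ ((i + 2) / (m + 1)) ^ 2 := by
  have h1 := mul_binomWeight m i x
  have h2 := mul_binomWeight (m + 1) (i + 1) x
  push_cast at h2
  have hb := binomWeight_le_one (m := m + 1 + 1) (i := i + 1 + 1) hx
  have hb0 := binomWeight_nonneg (m := m + 1 + 1) (i := i + 1 + 1) hx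
  have hw0 : 0 ≤ x ^ 2 * binomWeight m i x := mul_nonneg (sq_nonneg x) (binomWeight_nonneg hx)
  have hshift : ((m : ℝ) + 1) * (m + 2) * (x ^ 2 * binomWeight m i x)
      = (i + 1) * (i + 2) * binomWeight (m + 1 + 1) (i + 1 + 1) x := by
    linear_combination ((m : ℝ) + 2) * x * h1 + ((i : ℝ) + 1) * h2
  rw [div_pow, le_div_iff₀ (by positivity)]
  nlinarith

lemma rpow_mul_binomWeight_le {p : ℝ} (hp : 0 ≤ p) (hp2 : p ≤ 2) (hx : x ∈ Icc (0 : ℝ) 1) :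
    x ^ p * binomWeight m i x ≤ ((i + 2) / (m + 1)) ^ p := by
  have hb := binomWeight_nonneg (m := m) (i := i) hx
  have hpow : ∀ {y : ℝ}, 0 ≤ y → y ^ p = (y ^ 2) ^ (p / 2) := fun hy => by
    rw [← rpow_natCast_mul hy, Nat.cast_ofNat, mul_div_cancel₀ p two_ne_zero]
  calc x ^ p * binomWeight m i x ≤ (x ^ 2) ^ (p / 2) * binomWeight m i x ^ (p / 2) := by
        rw [← hpow hx.1]
        exact mul_le_mul_of_nonneg_left
          (self_le_rpow_of_le_one hb (binomWeight_le_one hx) (by linarith)) (by positivity [hx.1])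
    _ = (x ^ 2 * binomWeight m i x) ^ (p / 2) := (mul_rpow (by positivity) hb).symm
    _ ≤ (((i + 2) / (m + 1)) ^ 2) ^ (p / 2) :=
        rpow_le_rpow (mul_nonneg (sq_nonneg x) hb) (sq_mul_binomWeight_le hx) (by linarith)
    _ = ((i + 2) / (m + 1)) ^ p := (hpow (by positivity)).symm

lemma mul_sum_binomWeight_div_le (hx : x ∈ Icc (0 : ℝ) 1) :
    x * ∑ i ∈ Finset.range (m + 1), binomWeight m i x / (i + 1) ≤ 1 / (m + 1) := by
  have hshift : ∀ i,
      (m + 1) * (x * (binomWeight m i x / (i + 1))) = binomWeight (m + 1) (i + 1) x := fun i => by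
    rw [mul_div_assoc', mul_div_assoc', mul_binomWeight]
    field_simp
  have htail : ∑ i ∈ Finset.range (m + 1), binomWeight (m + 1) (i + 1) x ≤ 1 := by
    have h := sum_binomWeight (m + 1) x
    rw [Finset.sum_range_succ'] at h
    linarith [binomWeight_nonneg (m := m + 1) (i := 0) hx]
  rw [le_div_iff₀ (by positivity), mul_comm, Finset.mul_sum, Finset.mul_sum]
  simpa only [hshift] using htail

end binomWeight

lemma rpow_neg_tangent_le {s a y : ℝ} (hs0 : 0 ≤ s) (hs1 : s ≤ 1) (ha : 0 < a) (hy : 0 < y) :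
    a ^ (-s) * (1 - s * (y / a - 1)) ≤ y ^ (-s) := by
  have hu : 0 < y / a := div_pos hy ha
  have hbern : (y / a) ^ s ≤ 1 + s * (y / a - 1) := by
    simpa using rpow_one_add_le_one_add_mul_self (s := y / a - 1) (by linarith) hs0 hs1
  have hv : 0 < (y / a) ^ s := rpow_pos_of_pos hu s
  have htangent : 1 - s * (y / a - 1) ≤ (y / a) ^ (-s) := by
    rw [rpow_neg hu.le, ← one_div, le_div_iff₀ hv]
    nlinarith [sq_nonneg (s * (y / a - 1))]
  calc a ^ (-s) * (1 - s * (y / a - 1)) ≤ a ^ (-s) * (y / a) ^ (-s) :=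
        mul_le_mul_of_nonneg_left htangent (by positivity)
    _ = y ^ (-s) := by rw [← mul_rpow ha.le hu.le, mul_div_cancel₀ _ ha.ne']

lemma rpow_neg_sum_le {ι : Type*} {t : Finset ι} {w y : ι → ℝ} {s : ℝ} (hs0 : 0 ≤ s) (hs1 : s ≤ 1)
    (hw : ∀ i ∈ t, 0 ≤ w i) (hw1 : ∑ i ∈ t, w i = 1) (hy : ∀ i ∈ t, 0 < y i) :
    (∑ i ∈ t, w i * y i) ^ (-s) ≤ ∑ i ∈ t, w i * y i ^ (-s) := by
  set a := ∑ i ∈ t, w i * y i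
  obtain ⟨j, hj, hwj⟩ : ∃ j ∈ t, 0 < w j := by
    by_contra! h
    linarith [Finset.sum_nonpos h]
  have ha : 0 < a := Finset.sum_pos' (fun i hi => mul_nonneg (hw i hi) (hy i hi).le)
    ⟨j, hj, mul_pos hwj (hy j hj)⟩
  have hsum : ∑ i ∈ t, w i * (a ^ (-s) * (1 - s * (y i / a - 1)))
      = a ^ (-s) * ((1 + s) * ∑ i ∈ t, w i - s / a * a) := by
    simp only [a, Finset.mul_sum, ← Finset.sum_sub_distrib]
    exact Finset.sum_congr rfl fun i _ => by ring
  calc a ^ (-s) = ∑ i ∈ t, w i * (a ^ (-s) * (1 - s * (y i / a - 1))) := by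
        rw [hsum, hw1, div_mul_cancel₀ _ ha.ne']
        ring
    _ ≤ ∑ i ∈ t, w i * y i ^ (-s) := Finset.sum_le_sum fun i hi =>
        mul_le_mul_of_nonneg_left (rpow_neg_tangent_le hs0 hs1 ha (hy i hi)) (hw i hi)

lemma rpow_eq_rpow_half_mul_rpow_half {p x : ℝ} (hx : 0 ≤ x) (hp : 0 ≤ p) :
    x ^ p = x ^ (p / 2) * x ^ (p / 2) := by
  rw [← rpow_add_of_nonneg hx (by linarith) (by linarith), add_halves]

section powerDecay

variable {p x : ℝ} {m : ℕ}

lemma scaledRisk_powerDecay_le (hp : 0 ≤ p) (hp2 : p ≤ 2) (hx : x ∈ Icc (0 : ℝ) 1) :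
    scaledRisk p (powerDecay (p / 2)) m x ≤ x ^ (p / 2) := by
  have hx0 := hx.1
  set A := ∑ i ∈ Finset.range (m + 1), binomWeight m i x / (i + 1)
  have hA : 0 ≤ A := Finset.sum_nonneg fun i _ => div_nonneg (binomWeight_nonneg hx) (by positivity)
  have hjensen : binomMean (powerDecay (p / 2)) m x ≤ A ^ (p / 2) := by
    have := (concaveOn_rpow (p := p / 2) (by linarith) (by linarith)).le_map_sum
      (t := Finset.range (m + 1)) (w := fun i => binomWeight m i x) (p := fun i => ((i : ℝ) + 1)⁻¹)
      (fun i _ => binomWeight_nonneg hx) (sum_binomWeight m x) (fun i _ => by simp; positivity)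
    have hdecay : ∀ i : ℕ, powerDecay (p / 2) i = ((i : ℝ) + 1)⁻¹ ^ (p / 2) := fun i => by
      rw [powerDecay, rpow_neg (by positivity), inv_rpow (by positivity)]
    simp only [smul_eq_mul, ← div_eq_mul_inv] at this
    simpa only [binomMean, hdecay] using this
  have hmA : (m : ℝ) * (x * A) ≤ 1 := by
    have := mul_sum_binomWeight_div_le (m := m) hx
    rw [le_div_iff₀ (by positivity)] at this
    nlinarith [mul_nonneg hx0 hA]
  calc scaledRisk p (powerDecay (p / 2)) m x ≤ (m : ℝ) ^ (p / 2) * x ^ p * A ^ (p / 2) :=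
        mul_le_mul_of_nonneg_left hjensen (by positivity)
    _ = x ^ (p / 2) * ((m : ℝ) * (x * A)) ^ (p / 2) := by
        rw [mul_rpow (by positivity) (by positivity), mul_rpow hx0 hA,
          rpow_eq_rpow_half_mul_rpow_half hx0 hp]
        ring
    _ ≤ x ^ (p / 2) * 1 := mul_le_mul_of_nonneg_left
        (rpow_le_one (by positivity) hmA (by linarith)) (by positivity)
    _ = x ^ (p / 2) := mul_one _

lemma le_scaledRisk_powerDecay (hp : 0 ≤ p) (hp2 : p ≤ 2) (hx : x ∈ Ioc (0 : ℝ) 1) :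
    x ^ (p / 2) * ((m : ℝ) / (m + x⁻¹)) ^ (p / 2) ≤ scaledRisk p (powerDecay (p / 2)) m x := by
  have hx0 := hx.1
  have hx' : x ∈ Icc (0 : ℝ) 1 := Ioc_subset_Icc_self hx
  have hmean : ∑ i ∈ Finset.range (m + 1), binomWeight m i x * ((i : ℝ) + 1) = m * x + 1 := by
    simp only [mul_comm (binomWeight m _ x), add_mul, one_mul, Finset.sum_add_distrib,
      sum_mul_binomWeight, sum_binomWeight]
  have hjensen : ((m : ℝ) * x + 1) ^ (-(p / 2)) ≤ binomMean (powerDecay (p / 2)) m x := by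
    rw [← hmean]
    exact rpow_neg_sum_le (by linarith) (by linarith) (fun i _ => binomWeight_nonneg hx')
      (sum_binomWeight m x) (fun i _ => by positivity)
  calc x ^ (p / 2) * ((m : ℝ) / (m + x⁻¹)) ^ (p / 2)
      = (m : ℝ) ^ (p / 2) * x ^ p * ((m : ℝ) * x + 1) ^ (-(p / 2)) := by
        rw [rpow_eq_rpow_half_mul_rpow_half hx0.le hp, rpow_neg (by positivity),
          show (m : ℝ) / (m + x⁻¹) = m * x / (m * x + 1) by field_simp,
          div_rpow (by positivity) (by positivity), mul_rpow (by positivity) hx0.le]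
        ring
    _ ≤ scaledRisk p (powerDecay (p / 2)) m x :=
        mul_le_mul_of_nonneg_left hjensen (by positivity)

lemma tendsto_scaledRisk_powerDecay (hp : 0 ≤ p) (hp2 : p ≤ 2) (hx : x ∈ Ioc (0 : ℝ) 1) :
    Tendsto (fun m => scaledRisk p (powerDecay (p / 2)) m x) atTop (𝓝 (x ^ (p / 2))) := by
  have hlower : Tendsto (fun m : ℕ => x ^ (p / 2) * ((m : ℝ) / (m + x⁻¹)) ^ (p / 2)) atTop
      (𝓝 (x ^ (p / 2))) := by
    simpa using ((tendsto_natCast_div_add_atTop x⁻¹).rpow_const (Or.inl one_ne_zero)).const_mul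
      (x ^ (p / 2))
  exact tendsto_of_tendsto_of_tendsto_of_le_of_le hlower tendsto_const_nhds
    (fun m => le_scaledRisk_powerDecay hp hp2 hx)
    (fun m => scaledRisk_powerDecay_le hp hp2 (Ioc_subset_Icc_self hx))

end powerDecay

section uniform

variable {p x : ℝ} {m i : ℕ}

lemma rpow_mul_rpow_mul_binomWeight_le (hp : 0 ≤ p) (hp2 : p ≤ 2) (hx : x ∈ Icc (0 : ℝ) 1) :
    (m : ℝ) ^ (p / 2) * x ^ p * binomWeight m i x
      ≤ ((i : ℝ) + 2) ^ p * ((m : ℝ) + 1) ^ (-(p / 2)) := by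
  have hm : (0 : ℝ) < m + 1 := by positivity
  calc (m : ℝ) ^ (p / 2) * x ^ p * binomWeight m i x
      ≤ ((m : ℝ) + 1) ^ (p / 2) * ((i + 2) / (m + 1)) ^ p := by
        rw [mul_assoc]
        exact mul_le_mul (rpow_le_rpow (by positivity) (by linarith) (by linarith))
          (rpow_mul_binomWeight_le hp hp2 hx) (mul_nonneg (rpow_nonneg hx.1 p)
            (binomWeight_nonneg hx)) (by positivity)
    _ = ((i : ℝ) + 2) ^ p * ((m : ℝ) + 1) ^ (-(p / 2)) := by
        rw [div_rpow (by positivity) hm.le, show -(p / 2) = p / 2 + -p by ring, rpow_add hm,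
          rpow_neg hm.le]
        ring

lemma abs_binomMean_le (e : ℕ → ℝ) (N : ℕ) {s η : ℝ} (hη : 0 ≤ η)
    (he : ∀ i ≥ N, |e i| ≤ η * powerDecay s i) (hx : x ∈ Icc (0 : ℝ) 1) :
    |binomMean e m x| ≤ η * binomMean (powerDecay s) m x
      + ∑ i ∈ Finset.range N, binomWeight m i x * |e i| := by
  have hb : ∀ i, 0 ≤ binomWeight m i x := fun i => binomWeight_nonneg hx
  have hdecay : ∀ i, 0 ≤ powerDecay s i := fun i => by unfold powerDecay; positivity
  calc |binomMean e m x| ≤ ∑ i ∈ Finset.range (m + 1), binomWeight m i x * |e i| := by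
        refine (Finset.abs_sum_le_sum_abs _ _).trans_eq (Finset.sum_congr rfl fun i _ => ?_)
        rw [abs_mul, abs_of_nonneg (hb i)]
    _ = ∑ i ∈ (Finset.range (m + 1)).filter (· < N), binomWeight m i x * |e i|
        + ∑ i ∈ (Finset.range (m + 1)).filter (¬ · < N), binomWeight m i x * |e i| :=
        (Finset.sum_filter_add_sum_filter_not _ _ _).symm
    _ ≤ ∑ i ∈ Finset.range N, binomWeight m i x * |e i|
        + ∑ i ∈ Finset.range (m + 1), binomWeight m i x * (η * powerDecay s i) := by
        apply add_le_add
        · exact Finset.sum_le_sum_of_subset_of_nonneg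
            (fun i hi => Finset.mem_range.2 (Finset.mem_filter.1 hi).2)
            fun i _ _ => mul_nonneg (hb i) (abs_nonneg _)
        · refine (Finset.sum_le_sum fun i hi => mul_le_mul_of_nonneg_left
            (he i (not_lt.1 (Finset.mem_filter.1 hi).2)) (hb i)).trans ?_
          exact Finset.sum_le_sum_of_subset_of_nonneg (Finset.filter_subset _ _)
            fun i _ _ => mul_nonneg (hb i) (mul_nonneg hη (hdecay i))
    _ = η * binomMean (powerDecay s) m x + ∑ i ∈ Finset.range N, binomWeight m i x * |e i| := by
        rw [binomMean, Finset.mul_sum, add_comm]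
        simp only [mul_left_comm η]

lemma tendstoUniformlyOn_scaledRisk_zero (hp : 0 < p) (hp2 : p ≤ 2) {e : ℕ → ℝ}
    (he : Tendsto (fun i : ℕ => ((i : ℝ) + 1) ^ (p / 2) * e i) atTop (𝓝 0)) :
    TendstoUniformlyOn (scaledRisk p e) 0 atTop (Icc 0 1) := by
  rw [Metric.tendstoUniformlyOn_iff]
  intro ε hε
  obtain ⟨N, hN⟩ := eventually_atTop.1 (Metric.tendsto_nhds.1 he (ε / 2) (by positivity))
  have htail : ∀ i ≥ N, |e i| ≤ ε / 2 * powerDecay (p / 2) i := fun i hi => by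
    have hpos : (0 : ℝ) < ((i : ℝ) + 1) ^ (p / 2) := by positivity
    have h := hN i hi
    rw [Real.dist_0_eq_abs, abs_mul, abs_of_pos hpos, ← lt_div_iff₀' hpos] at h
    rw [powerDecay, rpow_neg (by positivity), ← div_eq_mul_inv]
    exact h.le
  set D := ∑ i ∈ Finset.range N, |e i| * ((i : ℝ) + 2) ^ p
  have hsmall : ∀ᶠ m : ℕ in atTop, D * ((m : ℝ) + 1) ^ (-(p / 2)) < ε / 2 := by
    have h := ((tendsto_rpow_neg_atTop (by linarith : 0 < p / 2)).comp
      (tendsto_atTop_add_const_right _ 1 tendsto_natCast_atTop_atTop)).const_mul D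
    rw [mul_zero] at h
    exact h.eventually_lt_const (by positivity)
  filter_upwards [hsmall] with m hm x hx
  rw [Pi.zero_apply, dist_zero_left, Real.norm_eq_abs]
  have hx0 := hx.1
  calc |scaledRisk p e m x| = (m : ℝ) ^ (p / 2) * x ^ p * |binomMean e m x| := by
        rw [scaledRisk, abs_mul, abs_of_nonneg (by positivity)]
    _ ≤ (m : ℝ) ^ (p / 2) * x ^ p * (ε / 2 * binomMean (powerDecay (p / 2)) m x
          + ∑ i ∈ Finset.range N, binomWeight m i x * |e i|) :=
        mul_le_mul_of_nonneg_left (abs_binomMean_le e N (by positivity) htail hx) (by positivity)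
    _ = ε / 2 * scaledRisk p (powerDecay (p / 2)) m x
          + ∑ i ∈ Finset.range N, |e i| * ((m : ℝ) ^ (p / 2) * x ^ p * binomWeight m i x) := by
        rw [scaledRisk, mul_add, Finset.mul_sum]
        congr 1
        · ring
        · exact Finset.sum_congr rfl fun i _ => by ring
    _ ≤ ε / 2 * 1 + D * ((m : ℝ) + 1) ^ (-(p / 2)) := by
        rw [Finset.sum_mul]
        apply add_le_add
        · exact mul_le_mul_of_nonneg_left ((scaledRisk_powerDecay_le hp.le hp2 hx).trans
            (rpow_le_one hx0 hx.2 (by linarith))) (by positivity)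
        · refine Finset.sum_le_sum fun i _ => ?_
          exact (mul_le_mul_of_nonneg_left (rpow_mul_rpow_mul_binomWeight_le hp.le hp2 hx)
            (abs_nonneg (e i))).trans_eq (by ring)
    _ < ε := by linarith

end uniform

lemma tendsto_add_one_rpow_mul {s C : ℝ} {r : ℕ → ℝ}
    (h : Tendsto (fun i : ℕ => (i : ℝ) ^ s * r i) atTop (𝓝 C)) :
    Tendsto (fun i : ℕ => ((i : ℝ) + 1) ^ s * r i) atTop (𝓝 C) := by
  have hratio : Tendsto (fun i : ℕ => ((i : ℝ) / (i + 1)) ^ (-s)) atTop (𝓝 1) := by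
    simpa using (tendsto_natCast_div_add_atTop (1 : ℝ)).rpow_const (Or.inl one_ne_zero)
  have hprod : Tendsto (fun i : ℕ => ((i : ℝ) / (i + 1)) ^ (-s) * ((i : ℝ) ^ s * r i)) atTop
      (𝓝 C) := by
    simpa using hratio.mul h
  refine hprod.congr' ?_
  filter_upwards [eventually_gt_atTop 0] with i hi
  have hi' : (0 : ℝ) < i := Nat.cast_pos.2 hi
  rw [rpow_neg (by positivity), div_rpow hi'.le (by positivity), inv_div]
  field_simp

section asymptotics

variable {p C x : ℝ} {r : ℕ → ℝ}

lemma scaledRisk_sub_const_mul (p C : ℝ) (r : ℕ → ℝ) (m : ℕ) (x : ℝ) :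
    scaledRisk p r m x - C * scaledRisk p (powerDecay (p / 2)) m x
      = scaledRisk p (fun i => r i - C * powerDecay (p / 2) i) m x := by
  simp only [scaledRisk, binomMean, mul_sub, Finset.sum_sub_distrib, Finset.mul_sum]
  congr 1
  exact Finset.sum_congr rfl fun i _ => by ring

lemma tendstoUniformlyOn_scaledRisk_sub (hp : 0 < p) (hp2 : p ≤ 2)
    (hr : Tendsto (fun i : ℕ => (i : ℝ) ^ (p / 2) * r i) atTop (𝓝 C)) :
    TendstoUniformlyOn (fun m x => scaledRisk p r m x - C * scaledRisk p (powerDecay (p / 2)) m x)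
      0 atTop (Icc 0 1) := by
  simp_rw [scaledRisk_sub_const_mul]
  refine tendstoUniformlyOn_scaledRisk_zero hp hp2 ?_
  have hcancel : ∀ i : ℕ, ((i : ℝ) + 1) ^ (p / 2) * powerDecay (p / 2) i = 1 := fun i => by
    rw [powerDecay, ← rpow_add (by positivity), add_neg_cancel, rpow_zero]
  simpa [mul_sub, ← mul_assoc, mul_comm _ C, mul_assoc C, hcancel] using
    (tendsto_add_one_rpow_mul hr).sub_const C

lemma eventually_scaledRisk_le (hp : 0 < p) (hp2 : p ≤ 2) (hC : 0 ≤ C)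
    (hr : Tendsto (fun i : ℕ => (i : ℝ) ^ (p / 2) * r i) atTop (𝓝 C)) {ε : ℝ} (hε : 0 < ε) :
    ∀ᶠ m in atTop, ∀ x ∈ Icc (0 : ℝ) 1, scaledRisk p r m x ≤ C * x ^ (p / 2) + ε := by
  have hunif := Metric.tendstoUniformlyOn_iff.1 (tendstoUniformlyOn_scaledRisk_sub hp hp2 hr)
  filter_upwards [hunif ε hε] with m hm x hx
  have h := hm x hx
  rw [Pi.zero_apply, dist_zero_left, Real.norm_eq_abs] at h
  have := mul_le_mul_of_nonneg_left (scaledRisk_powerDecay_le hp.le hp2 (m := m) hx) hC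
  linarith [le_abs_self (scaledRisk p r m x - C * scaledRisk p (powerDecay (p / 2)) m x)]

lemma tendsto_scaledRisk (hp : 0 < p) (hp2 : p ≤ 2)
    (hr : Tendsto (fun i : ℕ => (i : ℝ) ^ (p / 2) * r i) atTop (𝓝 C)) (hx : x ∈ Ioc (0 : ℝ) 1) :
    Tendsto (fun m => scaledRisk p r m x) atTop (𝓝 (C * x ^ (p / 2))) := by
  have h := ((tendstoUniformlyOn_scaledRisk_sub hp hp2 hr).tendsto_at (Ioc_subset_Icc_self hx)).add
    ((tendsto_scaledRisk_powerDecay hp.le hp2 hx).const_mul C)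
  simpa using h

end asymptotics

lemma sum_choose_mul_rpow_eq {p : ℝ} (hp : 0 < p) (r : ℕ → ℝ) (m : ℕ) {x : ℝ} (hx : 0 ≤ x) :
    ∑ i ∈ Finset.range (m + 1), (m.choose i : ℝ) * x ^ ((i : ℝ) + p) * (1 - x) ^ (m - i) * r i
      = x ^ p * binomMean r m x := by
  rw [binomMean, Finset.mul_sum]
  refine Finset.sum_congr rfl fun i _ => ?_
  rw [rpow_add' hx (by positivity), rpow_natCast, binomWeight]
  ring

lemma sum_rpow_le_card_rpow {ι : Type*} [Fintype ι] {q : ι → ℝ} (hq : q ∈ stdSimplex ℝ ι)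
    {s : ℝ} (hs0 : 0 ≤ s) (hs1 : s ≤ 1) :
    ∑ i, q i ^ s ≤ (Fintype.card ι : ℝ) ^ (1 - s) := by
  have hn : (0 : ℝ) < Fintype.card ι := by
    rcases isEmpty_or_nonempty ι with h | h
    · simpa [stdSimplex] using hq.2
    · exact_mod_cast Fintype.card_pos
  have h := (concaveOn_rpow hs0 hs1).le_map_sum (t := Finset.univ)
    (w := fun _ => (Fintype.card ι : ℝ)⁻¹) (p := q) (fun _ _ => by positivity)
    (by simp [Finset.card_univ, hn.ne']) (fun i _ => hq.1 i)
  simp only [smul_eq_mul, ← Finset.mul_sum, hq.2, mul_one] at h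
  rw [inv_rpow hn.le, inv_mul_le_iff₀ hn, ← rpow_neg hn.le] at h
  rwa [rpow_sub hn, rpow_one, div_eq_mul_inv, ← rpow_neg hn.le]

lemma tendsto_mul_sSup_of_forall_le_add {ι : Type*} {l : Filter ι} {c : ι → ℝ} {S : ι → Set ℝ}
    {a : ι → ℝ} {L : ℝ} (hc : ∀ i, 0 ≤ c i) (ha : ∀ i, a i ∈ S i)
    (hlim : Tendsto (fun i => c i * a i) l (𝓝 L))
    (hle : ∀ ε > 0, ∀ᶠ i in l, ∀ v ∈ S i, c i * v ≤ L + ε) :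
    Tendsto (fun i => c i * sSup (S i)) l (𝓝 L) := by
  have hmem : ∀ i, c i * a i ∈ c i • S i := fun i => Set.mem_smul_set.2 ⟨a i, ha i, rfl⟩
  have hle' : ∀ ε > 0, ∀ᶠ i in l, ∀ v ∈ c i • S i, v ≤ L + ε := fun ε hε => by
    filter_upwards [hle ε hε] with i hi
    rintro _ ⟨v, hv, rfl⟩
    exact hi v hv
  refine (tendsto_order.2 ⟨fun b hb => ?_, fun b hb => ?_⟩).congr
    fun i => Real.sSup_smul_of_nonneg (hc i) (S i)
  · filter_upwards [hlim.eventually (lt_mem_nhds hb), hle' 1 one_pos] with i hi hbdd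
    exact hi.trans_le (le_csSup ⟨_, hbdd⟩ (hmem i))
  · filter_upwards [hle' ((b - L) / 2) (by linarith)] with i hi
    exact (csSup_le ⟨_, hmem i⟩ hi).trans_lt (by linarith)

section simplex

variable {ι : Type*} [Fintype ι] [Nonempty ι] {p C : ℝ} {r : ℕ → ℝ}

lemma eventually_sum_scaledRisk_le (hp : 0 < p) (hp2 : p ≤ 2) (hC : 0 ≤ C)
    (hr : Tendsto (fun i : ℕ => (i : ℝ) ^ (p / 2) * r i) atTop (𝓝 C)) {ε : ℝ} (hε : 0 < ε) :
    ∀ᶠ m in atTop, ∀ q ∈ stdSimplex ℝ ι,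
      ∑ x, scaledRisk p r m (q x) ≤ C * (Fintype.card ι : ℝ) ^ (1 - p / 2) + ε := by
  have hn : (0 : ℝ) < Fintype.card ι := Nat.cast_pos.2 Fintype.card_pos
  filter_upwards [eventually_scaledRisk_le hp hp2 hC hr (ε := ε / Fintype.card ι) (by positivity)]
    with m hm q hq
  calc ∑ x, scaledRisk p r m (q x) ≤ ∑ x, (C * q x ^ (p / 2) + ε / Fintype.card ι) :=
        Finset.sum_le_sum fun x _ => hm (q x) (mem_Icc_of_mem_stdSimplex hq x)
    _ = C * ∑ x, q x ^ (p / 2) + ε := by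
        simp [Finset.sum_add_distrib, Finset.mul_sum, Finset.card_univ, mul_div_cancel₀ _ hn.ne']
    _ ≤ C * (Fintype.card ι : ℝ) ^ (1 - p / 2) + ε := by
        gcongr
        exact sum_rpow_le_card_rpow hq (by linarith) (by linarith)

lemma tendsto_sum_scaledRisk_uniform (hp : 0 < p) (hp2 : p ≤ 2)
    (hr : Tendsto (fun i : ℕ => (i : ℝ) ^ (p / 2) * r i) atTop (𝓝 C)) :
    Tendsto (fun m => ∑ _x : ι, scaledRisk p r m (Fintype.card ι : ℝ)⁻¹) atTop
      (𝓝 (C * (Fintype.card ι : ℝ) ^ (1 - p / 2))) := by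
  have hn : (1 : ℝ) ≤ Fintype.card ι := Nat.one_le_cast.2 Fintype.card_pos
  have hlim := (tendsto_scaledRisk hp hp2 hr
    ⟨by positivity, inv_le_one_of_one_le₀ hn⟩).const_mul (Fintype.card ι : ℝ)
  have hL : (Fintype.card ι : ℝ) * (C * (Fintype.card ι : ℝ)⁻¹ ^ (p / 2))
      = C * (Fintype.card ι : ℝ) ^ (1 - p / 2) := by
    rw [inv_rpow (by positivity), rpow_sub (by positivity), rpow_one]
    field_simp
  simpa [Finset.card_univ, hL] using hlim

end simplex

theorem stmt_17_general (p Cp : ℝ) (hp1 : 1 ≤ p) (hp2 : p ≤ 2) (hCp : 0 < Cp)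
    (r : ℕ → ℝ)
    (hrlim : Tendsto (fun i : ℕ => (i : ℝ) ^ (p / 2) * r i) atTop (nhds Cp))
    (𝒳 : Type*) [Fintype 𝒳] [Nonempty 𝒳] (k : ℕ) (hk : k = Fintype.card 𝒳)
    (F : ℕ → (𝒳 → ℝ) → ℝ)
    (hF : ∀ m q, F m q = ∑ x, ∑ i ∈ Finset.range (m + 1),
        (m.choose i : ℝ) * (q x) ^ ((i : ℝ) + p) * (1 - q x) ^ (m - i) * r i) :
    Tendsto
      (fun m : ℕ =>
        (m : ℝ) ^ (p / 2) *
          sSup {v : ℝ | ∃ q : 𝒳 → ℝ, (∀ x, 0 ≤ q x) ∧ (∑ x, q x) = 1 ∧ v = F m q})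
      atTop (nhds (Cp * (k : ℝ) ^ (1 - p / 2))) := by
  subst hk
  have hp : 0 < p := by linarith
  have hscaled : ∀ (m : ℕ) q, q ∈ stdSimplex ℝ 𝒳 →
      (m : ℝ) ^ (p / 2) * F m q = ∑ x, scaledRisk p r m (q x) := fun m q hq => by
    rw [hF, Finset.mul_sum]
    refine Finset.sum_congr rfl fun x _ => ?_
    rw [sum_choose_mul_rpow_eq hp r m (hq.1 x), scaledRisk, mul_assoc]
  have huniform : (fun _ => (Fintype.card 𝒳 : ℝ)⁻¹) ∈ stdSimplex ℝ 𝒳 := by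
    refine ⟨fun _ => by positivity, ?_⟩
    simp [Finset.card_univ]
  refine tendsto_mul_sSup_of_forall_le_add (fun m => by positivity)
    (fun m => ⟨_, huniform.1, huniform.2, rfl⟩) ?_ fun ε hε => ?_
  · simpa only [hscaled _ _ huniform] using tendsto_sum_scaledRisk_uniform (ι := 𝒳) hp hp2 hrlim
  · filter_upwards [eventually_sum_scaledRisk_le (ι := 𝒳) hp hp2 hCp.le hrlim hε] with m hm
    rintro _ ⟨q, hq0, hq1, rfl⟩
    rw [hscaled m q ⟨hq0, hq1⟩]
    exact hm q ⟨hq0, hq1⟩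

theorem stmt_17 (p Cp : ℝ) (hp1 : 1 ≤ p) (hp2 : p ≤ 2) (hCp : 0 < Cp)
    (r : ℕ → ℝ) (hr0 : ∀ i, 0 ≤ r i) (hr2 : ∀ i, r i ≤ 2)
    (hrlim : Tendsto (fun i : ℕ => (i : ℝ) ^ (p / 2) * r i) atTop (nhds Cp))
    (𝒳 : Type*) [Fintype 𝒳] [Nonempty 𝒳] (k : ℕ) (hk : k = Fintype.card 𝒳)
    (F : ℕ → (𝒳 → ℝ) → ℝ)
    (hF : ∀ m q, F m q = ∑ x, ∑ i ∈ Finset.range (m + 1),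
        (m.choose i : ℝ) * (q x) ^ ((i : ℝ) + p) * (1 - q x) ^ (m - i) * r i) :
    Tendsto
      (fun m : ℕ =>
        (m : ℝ) ^ (p / 2) *
          sSup {v : ℝ | ∃ q : 𝒳 → ℝ, (∀ x, 0 ≤ q x) ∧ (∑ x, q x) = 1 ∧ v = F m q})
      atTop (nhds (Cp * (k : ℝ) ^ (1 - p / 2))) :=
  stmt_17_general p Cp hp1 hp2 hCp r hrlim 𝒳 k hk F hF
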